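/- arXiv:1409.7585 — 6 statements merged into one kernel-verified Lean document; each statement's English description precedes it below -/
import Mathlib

section
/- Let p ∈ (0,∞)ⁿ and let a ∈ ∂E(p) be such that there exist c > 0 and positive integers m₁,…,m_n with p_j·|a_j|^{2p_j} = c·m_j for j = 1,…,n (in particular every a_j ≠ 0). Let B₁,…,B_n be finite Blaschke products, not all constant. Then the map λ ↦ (a₁·B₁(λ),…,a_n·B_n(λ)) maps 𝔻 into E(p) and is an m-geodesic of E(p) for some integer m ≥ 2; indeed the polynomial F(z) := ∏_{j=1}^n (z_j/a_j)^{m_j} is a holomorphic map E(p) → 𝔻 whose composition with this map is a non-constant finite Blaschke product. -/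
open Complex Metric Set Filter

noncomputable section

/-- The open unit disc `𝔻` in `ℂ`. -/
def unitDisc : Set ℂ := Metric.ball (0 : ℂ) 1

/-- The Möbius function `m_α(λ) = (λ - α)/(1 - conj α · λ)`. -/
def mobius (a z : ℂ) : ℂ := (z - a) / (1 - (starRingEnd ℂ) a * z)

/-- `B` agrees on the unit disc with a finite Blaschke product
`ζ · ∏_{j=1}^k m_{α_j}` of degree `k` (here `ζ ∈ 𝕋`, `α_j ∈ 𝔻`). -/
def IsBlaschkeOn (B : ℂ → ℂ) (k : ℕ) : Prop :=
  ∃ (ζ : ℂ) (α : Fin k → ℂ), ‖ζ‖ = 1 ∧ (∀ j, ‖α j‖ < 1) ∧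
    ∀ z ∈ unitDisc, B z = ζ * ∏ j, mobius (α j) z

variable {E : Type*} [NormedAddCommGroup E] [NormedSpace ℂ E]

/-- `f` is a weak `m`-extremal for the nodes `lam` with respect to the domain `D`:
there is no map `h`, holomorphic on an open neighborhood of the closed unit disc
with values in `D`, interpolating `f` at all the nodes. -/
def WeakExtremalFor (D : Set E) (f : ℂ → E) {m : ℕ} (lam : Fin m → ℂ) : Prop :=
  ¬ ∃ (U : Set ℂ) (h : ℂ → E), IsOpen U ∧ Metric.closedBall (0 : ℂ) 1 ⊆ U ∧
      DifferentiableOn ℂ h U ∧ Set.MapsTo h U D ∧ ∀ j, h (lam j) = f (lam j)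

/-- `f` is a weak `m`-extremal of `D`: it is a weak `m`-extremal for some
pairwise distinct nodes in the unit disc. -/
def IsWeakExtremal (D : Set E) (f : ℂ → E) (m : ℕ) : Prop :=
  ∃ lam : Fin m → ℂ, Function.Injective lam ∧ (∀ j, lam j ∈ unitDisc) ∧
    WeakExtremalFor D f lam

/-- `f` is an `m`-extremal of `D`: it is a weak `m`-extremal for every choice of
pairwise distinct nodes in the unit disc. -/
def IsExtremal (D : Set E) (f : ℂ → E) (m : ℕ) : Prop :=
  ∀ lam : Fin m → ℂ, Function.Injective lam → (∀ j, lam j ∈ unitDisc) →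
    WeakExtremalFor D f lam

/-- `f` is an `m`-geodesic of `D`: there is a holomorphic `F : D → 𝔻` such that
`F ∘ f` is a non-constant Blaschke product of degree at most `m - 1`. -/
def IsGeodesic (D : Set E) (f : ℂ → E) (m : ℕ) : Prop :=
  ∃ F : E → ℂ, DifferentiableOn ℂ F D ∧ Set.MapsTo F D unitDisc ∧
    ∃ k : ℕ, 1 ≤ k ∧ k ≤ m - 1 ∧ IsBlaschkeOn (fun z => F (f z)) k

/-- A domain `D ⊆ ℂⁿ` is `k`-balanced (quasi-balanced) if
`(λ^{k₁} z₁, …, λ^{k_n} z_n) ∈ D` for all `λ` in the closed unit disc, `z ∈ D`. -/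
def QuasiBalanced {n : ℕ} (k : Fin n → ℕ) (D : Set (Fin n → ℂ)) : Prop :=
  ∀ l : ℂ, ‖l‖ ≤ 1 → ∀ z ∈ D, (fun j => l ^ k j * z j) ∈ D

/-- The complex ellipsoid `E(p) = {z ∈ ℂⁿ : Σ_j |z_j|^{2 p_j} < 1}`. -/
def ellipsoid {n : ℕ} (p : Fin n → ℝ) : Set (Fin n → ℂ) :=
  {z | ∑ j, ‖z j‖ ^ (2 * p j) < 1}

/-- The Euclidean unit ball `𝔹_n ⊆ ℂⁿ`. -/
def euclideanBall (n : ℕ) : Set (Fin n → ℂ) :=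
  {z | ∑ j, ‖z j‖ ^ 2 < 1}

/-!
At the boundary point `a` the weights `s_j = |a_j|^{2p_j}` sum to `1`, and `p_j s_j = c m_j`
gives `|F(z)|^{2c} = ∏_j (t_j / s_j)^{s_j}` with `t_j = |z_j|^{2p_j}`. By the weighted AM-GM
inequality this is at most `Σ_j t_j < 1` on `E(p)`, so `F` maps `E(p)` into `𝔻`. On the other
hand `F(a₁B₁, …, a_nB_n) = ∏_j B_j^{m_j}` is a Blaschke product, of positive degree because some
`B_j` is non-constant.
-/

lemma mem_unitDisc_iff {z : ℂ} : z ∈ unitDisc ↔ ‖z‖ < 1 := by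
  simp [unitDisc]

lemma norm_mobius_lt_one {a z : ℂ} (ha : ‖a‖ < 1) (hz : ‖z‖ < 1) : ‖mobius a z‖ < 1 := by
  have hgap : normSq (1 - (starRingEnd ℂ) a * z) - normSq (z - a)
      = (1 - normSq a) * (1 - normSq z) := by
    simp only [normSq_apply, sub_re, sub_im, mul_re, mul_im, one_re, one_im, conj_re, conj_im]
    ring
  have hpos : 0 < (1 - normSq a) * (1 - normSq z) := by
    rw [normSq_eq_norm_sq, normSq_eq_norm_sq]
    exact mul_pos (sub_pos.2 (pow_lt_one₀ (norm_nonneg _) ha two_ne_zero))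
      (sub_pos.2 (pow_lt_one₀ (norm_nonneg _) hz two_ne_zero))
  have hlt : ‖z - a‖ < ‖1 - (starRingEnd ℂ) a * z‖ := by
    rw [← sq_lt_sq₀ (norm_nonneg _) (norm_nonneg _), ← normSq_eq_norm_sq, ← normSq_eq_norm_sq]
    linarith
  rw [mobius, norm_div]
  exact (div_lt_one ((norm_nonneg _).trans_lt hlt)).2 hlt

namespace IsBlaschkeOn

variable {B B' : ℂ → ℂ} {k : ℕ}

lemma congr (hB : IsBlaschkeOn B k) (h : EqOn B B' unitDisc) : IsBlaschkeOn B' k := by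
  obtain ⟨ζ, α, hζ, hα, hBz⟩ := hB
  exact ⟨ζ, α, hζ, hα, fun z hz => (h hz) ▸ hBz z hz⟩

lemma one : IsBlaschkeOn (fun _ => 1) 0 :=
  ⟨1, Fin.elim0, norm_one, fun j => j.elim0, fun _ _ => by simp⟩

lemma mul {k' : ℕ} (hB : IsBlaschkeOn B k) (hB' : IsBlaschkeOn B' k') :
    IsBlaschkeOn (fun z => B z * B' z) (k + k') := by
  obtain ⟨ζ, α, hζ, hα, hBz⟩ := hB
  obtain ⟨ζ', α', hζ', hα', hBz'⟩ := hB'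
  refine ⟨ζ * ζ', Fin.append α α', by rw [norm_mul, hζ, hζ', one_mul],
    Fin.addCases (by simpa using hα) (by simpa using hα'), fun z hz => ?_⟩
  dsimp only
  rw [hBz z hz, hBz' z hz, Fin.prod_univ_add]
  simp only [Fin.append_left, Fin.append_right]
  ring

lemma pow (hB : IsBlaschkeOn B k) (m : ℕ) : IsBlaschkeOn (fun z => B z ^ m) (m * k) := by
  induction m with
  | zero => simpa using one
  | succ m ih =>
    rw [Nat.succ_mul]
    exact (ih.mul hB).congr fun z _ => (pow_succ _ _).symm

lemma finsetProd {ι : Type*} (s : Finset ι) {B : ι → ℂ → ℂ} {k : ι → ℕ}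
    (h : ∀ j ∈ s, IsBlaschkeOn (B j) (k j)) :
    IsBlaschkeOn (fun z => ∏ j ∈ s, B j z) (∑ j ∈ s, k j) := by
  classical
  induction s using Finset.induction_on with
  | empty => simpa using one
  | insert j s hj ih =>
    rw [Finset.sum_insert hj]
    exact ((h j (s.mem_insert_self j)).mul (ih fun i hi => h i (s.mem_insert_of_mem hi))).congr
      fun z _ => by simp only [Finset.prod_insert hj]

lemma norm_le_one (hB : IsBlaschkeOn B k) {z : ℂ} (hz : z ∈ unitDisc) : ‖B z‖ ≤ 1 := by
  obtain ⟨ζ, α, hζ, hα, hBz⟩ := hB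
  rw [hBz z hz, norm_mul, hζ, one_mul, norm_prod]
  exact Finset.prod_le_one (fun _ _ => norm_nonneg _)
    fun j _ => (norm_mobius_lt_one (hα j) (mem_unitDisc_iff.1 hz)).le

lemma norm_lt_one (hB : IsBlaschkeOn B k) (hk : k ≠ 0) {z : ℂ} (hz : z ∈ unitDisc) :
    ‖B z‖ < 1 := by
  obtain ⟨ζ, α, hζ, hα, hBz⟩ := hB
  obtain ⟨k, rfl⟩ := Nat.exists_eq_succ_of_ne_zero hk
  have hlt := fun j => norm_mobius_lt_one (hα j) (mem_unitDisc_iff.1 hz)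
  rw [hBz z hz, norm_mul, hζ, one_mul, norm_prod, Fin.prod_univ_succ]
  exact mul_lt_one_of_nonneg_of_lt_one_left (norm_nonneg _) (hlt 0)
    (Finset.prod_le_one (fun _ _ => norm_nonneg _) fun j _ => (hlt j.succ).le)

lemma degree_ne_zero (hB : IsBlaschkeOn B k) {z w : ℂ} (hz : z ∈ unitDisc)
    (hw : w ∈ unitDisc) (hne : B z ≠ B w) : k ≠ 0 := by
  rintro rfl
  obtain ⟨ζ, α, -, -, hBz⟩ := hB
  simp only [Finset.univ_eq_empty, Finset.prod_empty] at hBz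
  exact hne ((hBz z hz).trans (hBz w hw).symm)

end IsBlaschkeOn

lemma differentiable_prod_div_pow {ι : Type*} [Fintype ι] (a : ι → ℂ) (m : ι → ℕ) :
    Differentiable ℂ fun z : ι → ℂ => ∏ j, (z j / a j) ^ m j := fun z => by
  classical
  have hfactor (j : ι) : DifferentiableAt ℂ (fun z : ι → ℂ => (z j / a j) ^ m j) z := by
    fun_prop
  exact (HasFDerivAt.finsetProd fun j _ => (hfactor j).hasFDerivAt).differentiableAt

section Ellipsoid

variable {n : ℕ} {p : Fin n → ℝ} {a : Fin n → ℂ}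

lemma mul_mem_ellipsoid (hp : ∀ j, 0 < p j) (ha : ∑ j, ‖a j‖ ^ (2 * p j) = 1)
    (ha₀ : ∀ j, a j ≠ 0) {w : Fin n → ℂ} (hw : ∀ j, ‖w j‖ ≤ 1) {j₀ : Fin n}
    (hj₀ : ‖w j₀‖ < 1) : (fun j => a j * w j) ∈ ellipsoid p := by
  have hexp : ∀ j, 0 < 2 * p j := fun j => by linarith [hp j]
  have hs : ∀ j, 0 < ‖a j‖ ^ (2 * p j) := fun j => Real.rpow_pos_of_pos (norm_pos_iff.2 (ha₀ j)) _
  show ∑ j, ‖a j * w j‖ ^ (2 * p j) < 1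
  simp only [norm_mul, Real.mul_rpow (norm_nonneg _) (norm_nonneg _)]
  rw [← ha]
  exact Finset.sum_lt_sum
    (fun j _ => mul_le_of_le_one_right (hs j).le
      (Real.rpow_le_one (norm_nonneg _) (hw j) (hexp j).le))
    ⟨j₀, Finset.mem_univ _,
      mul_lt_of_lt_one_right (hs j₀) (Real.rpow_lt_one (norm_nonneg _) hj₀ (hexp j₀))⟩

lemma norm_prod_div_pow_lt_one {c : ℝ} (hc : 0 < c) {m : Fin n → ℕ}
    (ha : ∑ j, ‖a j‖ ^ (2 * p j) = 1) (ha₀ : ∀ j, a j ≠ 0)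
    (hpa : ∀ j, p j * ‖a j‖ ^ (2 * p j) = c * m j) {z : Fin n → ℂ} (hz : z ∈ ellipsoid p) :
    ‖∏ j, (z j / a j) ^ m j‖ < 1 := by
  set s : Fin n → ℝ := fun j => ‖a j‖ ^ (2 * p j)
  set t : Fin n → ℝ := fun j => ‖z j‖ ^ (2 * p j)
  have hs : ∀ j, 0 < s j := fun j => Real.rpow_pos_of_pos (norm_pos_iff.2 (ha₀ j)) _
  have hfactor : ∀ j, (‖z j / a j‖ ^ m j) ^ (2 * c) = (t j / s j) ^ s j := fun j => by
    have hexp : (m j : ℝ) * (2 * c) = 2 * p j * s j := by linarith [hpa j]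
    rw [← Real.rpow_natCast, ← Real.rpow_mul (norm_nonneg _), hexp,
      Real.rpow_mul (norm_nonneg _), norm_div, Real.div_rpow (norm_nonneg _) (norm_nonneg _)]
  have hamgm : ∏ j, (t j / s j) ^ s j ≤ ∑ j, t j := by
    refine (Real.geom_mean_le_arith_mean_weighted _ _ _ (fun j _ => (hs j).le) ha
      fun j _ => div_nonneg (Real.rpow_nonneg (norm_nonneg _) _) (hs j).le).trans_eq ?_
    exact Finset.sum_congr rfl fun j _ => mul_div_cancel₀ _ (hs j).ne'
  have hlt : ‖∏ j, (z j / a j) ^ m j‖ ^ (2 * c) < 1 := by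
    rw [norm_prod, ← Real.finsetProd_rpow _ _ fun _ _ => norm_nonneg _]
    simp only [norm_pow, hfactor]
    exact hamgm.trans_lt hz
  exact (Real.rpow_lt_one_iff' (norm_nonneg _) (by positivity)).1 hlt

end Ellipsoid

/-- Let `a ∈ ∂E(p)` satisfy `p_j |a_j|^{2p_j} = c m_j` with
`c > 0` and `m_j ∈ ℕ`, and let `B₁, …, B_n` be finite Blaschke products, not all
constant. Then `λ ↦ (a₁ B₁(λ), …, a_n B_n(λ))` maps `𝔻` into `E(p)` and is an
`m`-geodesic of `E(p)` for some `m ≥ 2`; indeed `F(z) = ∏_j (z_j/a_j)^{m_j}` is a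
holomorphic map `E(p) → 𝔻` whose composition with it is a non-constant finite
Blaschke product. -/
theorem blaschke_coordinates_are_geodesics
    {n : ℕ} (p : Fin n → ℝ) (hp : ∀ j, 0 < p j)
    (a : Fin n → ℂ) (ha : ∑ j, ‖a j‖ ^ (2 * p j) = 1)
    (c : ℝ) (hc : 0 < c) (mv : Fin n → ℕ) (hmv : ∀ j, 1 ≤ mv j)
    (hpa : ∀ j, p j * ‖a j‖ ^ (2 * p j) = c * (mv j : ℝ))
    (B : Fin n → ℂ → ℂ) (hB : ∀ j, ∃ k : ℕ, IsBlaschkeOn (B j) k)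
    (hBnc : ∃ j, ∃ z ∈ unitDisc, ∃ w ∈ unitDisc, B j z ≠ B j w)
    (f : ℂ → Fin n → ℂ) (hf : f = fun z j => a j * B j z)
    (F : (Fin n → ℂ) → ℂ) (hF : F = fun z => ∏ j, (z j / a j) ^ (mv j)) :
    Set.MapsTo f unitDisc (ellipsoid p) ∧
    (∃ m : ℕ, 2 ≤ m ∧ IsGeodesic (ellipsoid p) f m) ∧
    DifferentiableOn ℂ F (ellipsoid p) ∧
    Set.MapsTo F (ellipsoid p) unitDisc ∧
    (∃ k : ℕ, 1 ≤ k ∧ IsBlaschkeOn (fun z => F (f z)) k) := by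
  choose k hk using hB
  obtain ⟨j₀, z₀, hz₀, w₀, hw₀, hne⟩ := hBnc
  have hk₀ : k j₀ ≠ 0 := (hk j₀).degree_ne_zero hz₀ hw₀ hne
  have ha₀ : ∀ j, a j ≠ 0 := fun j h => by
    have := hpa j
    rw [h, norm_zero, Real.zero_rpow (by linarith [hp j]), mul_zero] at this
    exact (mul_pos hc (Nat.cast_pos.2 (hmv j))).ne this
  have hfD : MapsTo f unitDisc (ellipsoid p) := fun z hz => hf ▸
    mul_mem_ellipsoid hp ha ha₀ (fun j => (hk j).norm_le_one hz) ((hk j₀).norm_lt_one hk₀ hz)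
  have hFd : DifferentiableOn ℂ F (ellipsoid p) :=
    hF ▸ (differentiable_prod_div_pow a mv).differentiableOn
  have hFE : MapsTo F (ellipsoid p) unitDisc := fun z hz => hF ▸
    mem_unitDisc_iff.2 (norm_prod_div_pow_lt_one hc ha ha₀ hpa hz)
  have hFf : IsBlaschkeOn (fun z => F (f z)) (∑ j, mv j * k j) :=
    (IsBlaschkeOn.finsetProd _ fun j _ => (hk j).pow (mv j)).congr fun z _ => by
      simp only [hF, hf, mul_div_cancel_left₀ _ (ha₀ _)]
  have hdeg : 1 ≤ ∑ j, mv j * k j :=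
    (Nat.one_le_iff_ne_zero.2 (Nat.mul_ne_zero (by linarith [hmv j₀]) hk₀)).trans
      (Finset.single_le_sum (f := fun j => mv j * k j) (fun _ _ => Nat.zero_le _)
        (Finset.mem_univ j₀))
  exact ⟨hfD, ⟨∑ j, mv j * k j + 1, by omega, F, hFd, hFE, _, hdeg, by omega, hFf⟩,
    hFd, hFE, _, hdeg, hFf⟩
end
end

section
/- Let p ∈ (0,∞)ⁿ, let a ∈ ∂E(p), let m₁,…,m_n be positive integers with least common multiple m, and assume 2·p_j·m_j ≥ m for j = 1,…,n. Then the map λ ↦ (a₁·λ^{m₁},…,a_n·λ^{m_n}) maps 𝔻 into E(p) and is an (m+1)-geodesic of E(p). -/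
open Complex Metric Set Filter

noncomputable section

variable {E : Type*} [NormedAddCommGroup E] [NormedSpace ℂ E]

/-! With `q_j = M / m_j`, the polynomial `F(z) = C⁻¹ Σ_j κ_j (z_j / a_j)^{q_j}`, where
`κ_j = |a_j|^{2p_j} · 2p_j / q_j` and `C = Σ_j κ_j`, satisfies `F ∘ f = λ^M`.
Because `q_j / 2p_j ≤ 1`, Bernoulli's inequality `u^t ≤ 1 - t + t u` at `u = |z_j / a_j|^{2p_j}`
bounds the `j`-th term of `C · |F(z)|` by `κ_j - |a_j|^{2p_j} + |z_j|^{2p_j}`; summing,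
`C · |F(z)| ≤ C - 1 + Σ_j |z_j|^{2p_j} < C` on `E(p)`. -/

open Finset

lemma rpow_mul_div_rpow_le {x y r s : ℝ} (hx : 0 ≤ x) (hy : 0 ≤ y) (hr : 0 < r)
    (hrs : r ≤ s) :
    x ^ s * (s / r) * (y / x) ^ r ≤ x ^ s * (s / r) - x ^ s + y ^ s := by
  have hs : 0 < s := hr.trans_le hrs
  rcases hx.eq_or_lt with rfl | hx
  · simp only [Real.zero_rpow hs.ne', zero_mul, sub_zero, zero_add]
    positivity
  set u := (y / x) ^ s with hu_def
  have hu : 0 ≤ u := by positivity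
  have hbernoulli : (y / x) ^ r ≤ 1 + r / s * (u - 1) := by
    have h := rpow_one_add_le_one_add_mul_self (s := u - 1) (by linarith)
      (div_nonneg hr.le hs.le) ((div_le_one hs).2 hrs)
    rwa [add_sub_cancel, ← Real.rpow_mul (by positivity), mul_div_cancel₀ _ hs.ne'] at h
  have hxu : x ^ s * u = y ^ s := by
    rw [hu_def, Real.div_rpow hy hx.le, mul_div_cancel₀ _ (Real.rpow_pos_of_pos hx s).ne']
  calc x ^ s * (s / r) * (y / x) ^ r ≤ x ^ s * (s / r) * (1 + r / s * (u - 1)) := by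
        gcongr
    _ = x ^ s * (s / r) - x ^ s + x ^ s * u := by field_simp; ring
    _ = x ^ s * (s / r) - x ^ s + y ^ s := by rw [hxu]

lemma monomial_mapsTo_ellipsoid {n : ℕ} {p : Fin n → ℝ} {a : Fin n → ℂ}
    (ha : ∑ j, ‖a j‖ ^ (2 * p j) ≤ 1) {mv : Fin n → ℕ} {r : ℝ} (hr : 0 < r)
    (hrp : ∀ j, r ≤ 2 * p j * mv j) :
    MapsTo (fun z j => a j * z ^ mv j) unitDisc (ellipsoid p) := by
  intro z hz
  have hz1 : ‖z‖ < 1 := mem_ball_zero_iff.1 hz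
  have hterm : ∀ j, ‖a j * z ^ mv j‖ ^ (2 * p j) ≤ ‖a j‖ ^ (2 * p j) * ‖z‖ ^ r := by
    intro j
    rw [norm_mul, norm_pow, Real.mul_rpow (norm_nonneg _) (by positivity),
      ← Real.rpow_natCast, ← Real.rpow_mul (norm_nonneg z)]
    exact mul_le_mul_of_nonneg_left (Real.rpow_le_rpow_of_exponent_ge' (norm_nonneg z) hz1.le
      hr.le ((hrp j).trans_eq (mul_comm _ _))) (by positivity)
  calc ∑ j, ‖a j * z ^ mv j‖ ^ (2 * p j) ≤ ∑ j, ‖a j‖ ^ (2 * p j) * ‖z‖ ^ r :=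
        sum_le_sum fun j _ => hterm j
    _ = (∑ j, ‖a j‖ ^ (2 * p j)) * ‖z‖ ^ r := by rw [sum_mul]
    _ ≤ 1 * ‖z‖ ^ r := by gcongr
    _ < 1 := by rw [one_mul]; exact Real.rpow_lt_one (norm_nonneg z) hz1 hr

lemma isBlaschkeOn_pow (k : ℕ) : IsBlaschkeOn (fun z => z ^ k) k :=
  ⟨1, 0, norm_one, fun _ => by simp, fun z _ => by simp [mobius]⟩

section EllipsoidPeak

variable {n : ℕ} (p : Fin n → ℝ) (a : Fin n → ℂ) (q : Fin n → ℕ)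

def peakWeight (j : Fin n) : ℝ := ‖a j‖ ^ (2 * p j) * (2 * p j / q j)

/-- When `a j = 0` the junk value `z j / 0 = 0` is harmless, since then `peakWeight p a q j = 0`. -/
def ellipsoidPeak (z : Fin n → ℂ) : ℂ :=
  (∑ j, (peakWeight p a q j : ℂ) * (z j / a j) ^ q j) / (∑ j, peakWeight p a q j : ℝ)

variable {p a q}

lemma differentiable_ellipsoidPeak : Differentiable ℂ (ellipsoidPeak p a q) := by
  unfold ellipsoidPeak
  fun_prop

lemma one_le_sum_peakWeight (hq0 : ∀ j, 0 < q j) (hq : ∀ j, (q j : ℝ) ≤ 2 * p j)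
    (ha : ∑ j, ‖a j‖ ^ (2 * p j) = 1) : 1 ≤ ∑ j, peakWeight p a q j :=
  ha ▸ sum_le_sum fun j _ => le_mul_of_one_le_right (by positivity)
    ((one_le_div (Nat.cast_pos.2 (hq0 j))).2 (hq j))

lemma ellipsoidPeak_monomial (hq0 : ∀ j, 0 < q j) (hq : ∀ j, (q j : ℝ) ≤ 2 * p j)
    (ha : ∑ j, ‖a j‖ ^ (2 * p j) = 1) {mv : Fin n → ℕ} {M : ℕ} (hmq : ∀ j, mv j * q j = M)
    (z : ℂ) : ellipsoidPeak p a q (fun j => a j * z ^ mv j) = z ^ M := by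
  have hterm : ∀ j, (peakWeight p a q j : ℂ) * (a j * z ^ mv j / a j) ^ q j
      = peakWeight p a q j * z ^ M := by
    intro j
    by_cases haj : a j = 0
    · have hp : 2 * p j ≠ 0 := ((Nat.cast_pos.2 (hq0 j)).trans_le (hq j)).ne'
      simp [peakWeight, haj, Real.zero_rpow hp]
    · rw [mul_div_cancel_left₀ _ haj, ← pow_mul, hmq]
  have hC : ((∑ j, peakWeight p a q j : ℝ) : ℂ) ≠ 0 := by
    exact_mod_cast (zero_lt_one.trans_le (one_le_sum_peakWeight hq0 hq ha)).ne'
  rw [ellipsoidPeak, sum_congr rfl fun j _ => hterm j, ← sum_mul, ← ofReal_sum,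
    mul_div_cancel_left₀ _ hC]

lemma norm_ellipsoidPeak_lt_one (hq0 : ∀ j, 0 < q j) (hq : ∀ j, (q j : ℝ) ≤ 2 * p j)
    (ha : ∑ j, ‖a j‖ ^ (2 * p j) = 1) {z : Fin n → ℂ} (hz : z ∈ ellipsoid p) :
    ‖ellipsoidPeak p a q z‖ < 1 := by
  have hC := one_le_sum_peakWeight hq0 hq ha
  have hterm : ∀ j, ‖(peakWeight p a q j : ℂ) * (z j / a j) ^ q j‖
      ≤ peakWeight p a q j - ‖a j‖ ^ (2 * p j) + ‖z j‖ ^ (2 * p j) := by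
    intro j
    have hκ : 0 ≤ peakWeight p a q j := mul_nonneg (by positivity)
      (div_nonneg ((Nat.cast_nonneg _).trans (hq j)) (Nat.cast_nonneg _))
    rw [norm_mul, norm_real, Real.norm_of_nonneg hκ, norm_pow,
      norm_div, ← Real.rpow_natCast]
    exact rpow_mul_div_rpow_le (norm_nonneg _) (norm_nonneg _) (Nat.cast_pos.2 (hq0 j)) (hq j)
  rw [ellipsoidPeak, norm_div, norm_real, Real.norm_of_nonneg (by linarith),
    div_lt_one (by linarith)]
  calc ‖∑ j, (peakWeight p a q j : ℂ) * (z j / a j) ^ q j‖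
      ≤ ∑ j, (peakWeight p a q j - ‖a j‖ ^ (2 * p j) + ‖z j‖ ^ (2 * p j)) :=
        (norm_sum_le _ _).trans (sum_le_sum fun j _ => hterm j)
    _ < ∑ j, peakWeight p a q j := by
        rw [sum_add_distrib, sum_sub_distrib, ha]
        linarith [show ∑ j, ‖z j‖ ^ (2 * p j) < 1 from hz]

end EllipsoidPeak

theorem monomial_map_is_geodesic_general
    {n : ℕ} (p : Fin n → ℝ)
    (a : Fin n → ℂ) (ha : ∑ j, ‖a j‖ ^ (2 * p j) = 1)
    (mv : Fin n → ℕ) (hmv : ∀ j, 1 ≤ mv j)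
    (M : ℕ) (hM : M = Finset.univ.lcm mv)
    (hMp : ∀ j, (M : ℝ) ≤ 2 * p j * (mv j : ℝ))
    (f : ℂ → Fin n → ℂ) (hf : f = fun z j => a j * z ^ (mv j)) :
    Set.MapsTo f unitDisc (ellipsoid p) ∧ IsGeodesic (ellipsoid p) f (M + 1) := by
  subst hf
  have hM0 : 0 < M := by
    rw [hM, pos_iff_ne_zero, Ne, Finset.lcm_eq_zero_iff]
    rintro ⟨j, -, hj⟩
    exact absurd (hmv j) (by omega)
  have hdvd : ∀ j, mv j ∣ M := fun j => hM ▸ dvd_lcm (mem_univ j)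
  set q : Fin n → ℕ := fun j => M / mv j
  have hmq : ∀ j, mv j * q j = M := fun j => Nat.mul_div_cancel' (hdvd j)
  have hq0 : ∀ j, 0 < q j := fun j => Nat.div_pos (Nat.le_of_dvd hM0 (hdvd j)) (hmv j)
  have hq : ∀ j, (q j : ℝ) ≤ 2 * p j := fun j => by
    refine le_of_mul_le_mul_left ?_ (Nat.cast_pos.2 (hmv j) : (0 : ℝ) < mv j)
    rw [← Nat.cast_mul, hmq, mul_comm]
    exact hMp j
  refine ⟨monomial_mapsTo_ellipsoid ha.le (Nat.cast_pos.2 hM0) hMp, ellipsoidPeak p a q,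
    differentiable_ellipsoidPeak.differentiableOn,
    fun z hz => mem_ball_zero_iff.2 (norm_ellipsoidPeak_lt_one hq0 hq ha hz), M, hM0, by omega, ?_⟩
  simpa only [ellipsoidPeak_monomial hq0 hq ha hmq] using isBlaschkeOn_pow M

/-- Let `a ∈ ∂E(p)`, let `m₁, …, m_n` be positive integers with
least common multiple `M`, and assume `2 p_j m_j ≥ M` for all `j`. Then
`λ ↦ (a₁ λ^{m₁}, …, a_n λ^{m_n})` maps `𝔻` into `E(p)` and is an
`(M+1)`-geodesic of `E(p)`. -/
theorem monomial_map_is_geodesic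
    {n : ℕ} (p : Fin n → ℝ) (hp : ∀ j, 0 < p j)
    (a : Fin n → ℂ) (ha : ∑ j, ‖a j‖ ^ (2 * p j) = 1)
    (mv : Fin n → ℕ) (hmv : ∀ j, 1 ≤ mv j)
    (M : ℕ) (hM : M = Finset.univ.lcm mv)
    (hMp : ∀ j, (M : ℝ) ≤ 2 * p j * (mv j : ℝ))
    (f : ℂ → Fin n → ℂ) (hf : f = fun z j => a j * z ^ (mv j)) :
    Set.MapsTo f unitDisc (ellipsoid p) ∧ IsGeodesic (ellipsoid p) f (M + 1) :=
  monomial_map_is_geodesic_general p a ha mv hmv M hM hMp f hf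
end
end

section
/- Let D ⊆ ℂⁿ be a domain, let λ₁,…,λ_m ∈ 𝔻 be pairwise distinct, and for each index k let λ₁^{(k)},…,λ_m^{(k)} ∈ 𝔻 be pairwise distinct points with λ_j^{(k)} → λ_j as k → ∞ for each j. If f : 𝔻 → D is holomorphic and, for every k, f is a weak m-extremal for λ₁^{(k)},…,λ_m^{(k)}, then f is a weak m-extremal for λ₁,…,λ_m. -/
/-!
If `h` interpolated `f` at the limit nodes, correct it by the Lagrange interpolant of the errors
`f (λⱼ⁽ᵏ⁾) - h (λⱼ⁽ᵏ⁾)`. These errors tend to `0`, and since the limit nodes are distinct the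
Lagrange basis stays bounded on the closed disc, so the correction tends to `0` uniformly there.
For large `k` the corrected map therefore still sends the closed disc, hence an open
neighbourhood of it, into `D`, while interpolating `f` at the nodes `λ⁽ᵏ⁾`.
-/

open Complex Metric Set Filter

noncomputable section

variable {E : Type*} [NormedAddCommGroup E] [NormedSpace ℂ E]

open Finset Polynomial Topology

section LagrangeInterpolation

variable {𝕜 : Type*} [NontriviallyNormedField 𝕜] {ι : Type*} [Fintype ι] [DecidableEq ι]
  {V : Type*} [NormedAddCommGroup V] [NormedSpace 𝕜 V]

def lagrangeInterp (ν : ι → 𝕜) (w : ι → V) (z : 𝕜) : V :=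
  ∑ j, (Lagrange.basis univ ν j).eval z • w j

theorem lagrangeInterp_apply_node {ν : ι → 𝕜} (hν : Function.Injective ν) (w : ι → V)
    (j : ι) : lagrangeInterp ν w (ν j) = w j := by
  rw [lagrangeInterp, Finset.sum_eq_single j]
  · rw [Lagrange.eval_basis_self hν.injOn (Finset.mem_univ j), one_smul]
  · intro i _ hij
    rw [Lagrange.eval_basis_of_ne hij (Finset.mem_univ j), zero_smul]
  · exact fun hj => absurd (Finset.mem_univ j) hj

theorem differentiable_lagrangeInterp (ν : ι → 𝕜) (w : ι → V) :
    Differentiable 𝕜 (lagrangeInterp ν w) := by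
  unfold lagrangeInterp
  fun_prop

-- No injectivity needed: a repeated node contributes `0⁻¹ = 0` on both sides.
theorem norm_eval_lagrangeBasis_le (ν : ι → 𝕜) (j : ι) {R : ℝ} {z : 𝕜} (hz : ‖z‖ ≤ R) :
    ‖(Lagrange.basis univ ν j).eval z‖ ≤ ∏ i ∈ univ.erase j, ‖ν j - ν i‖⁻¹ * (R + ‖ν i‖) := by
  simp only [Lagrange.basis, Lagrange.basisDivisor, eval_prod, eval_mul, eval_C, eval_sub,
    eval_X, norm_prod, norm_mul, norm_inv]
  refine prod_le_prod (fun i _ => by positivity) fun i _ => ?_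
  gcongr
  exact (norm_sub_le _ _).trans (by gcongr)

theorem norm_lagrangeInterp_le (ν : ι → 𝕜) (w : ι → V) {R : ℝ} {z : 𝕜} (hz : ‖z‖ ≤ R) :
    ‖lagrangeInterp ν w z‖ ≤
      ∑ j, (∏ i ∈ univ.erase j, ‖ν j - ν i‖⁻¹ * (R + ‖ν i‖)) * ‖w j‖ := by
  refine (norm_sum_le _ _).trans (sum_le_sum fun j _ => ?_)
  rw [norm_smul]
  gcongr
  exact norm_eval_lagrangeBasis_le ν j hz

theorem tendstoUniformlyOn_lagrangeInterp {α : Type*} {l : Filter α} {ν : α → ι → 𝕜}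
    {ν₀ : ι → 𝕜} (hν₀ : Function.Injective ν₀) (hν : Tendsto ν l (𝓝 ν₀)) {w : α → ι → V}
    (hw : Tendsto w l (𝓝 0)) (R : ℝ) :
    TendstoUniformlyOn (fun a => lagrangeInterp (ν a) (w a)) 0 l (closedBall 0 R) := by
  have hbound : Tendsto
      (fun a => ∑ j, (∏ i ∈ univ.erase j, ‖ν a j - ν a i‖⁻¹ * (R + ‖ν a i‖)) * ‖w a j‖)
      l (𝓝 0) := by
    have hν' := tendsto_pi_nhds.1 hν
    have hw' := tendsto_pi_nhds.1 hw
    simpa using tendsto_finsetSum univ fun j _ =>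
      (tendsto_finsetProd (univ.erase j) fun i hi =>
        (((hν' j).sub (hν' i)).norm.inv₀ (norm_ne_zero_iff.2 (sub_ne_zero.2
          (hν₀.ne (ne_of_mem_erase hi).symm)))).mul
          (tendsto_const_nhds.add (hν' i).norm)).mul (hw' j).norm
  refine Metric.tendstoUniformlyOn_iff.2 fun ε hε => ?_
  filter_upwards [hbound.eventually_lt_const hε] with a ha z hz
  rw [Pi.zero_apply, dist_zero_left]
  exact (norm_lagrangeInterp_le _ _ (mem_closedBall_zero_iff.1 hz)).trans_lt ha

end LagrangeInterpolation

theorem TendstoUniformlyOn.eventually_mapsTo_add {X ι V : Type*} [TopologicalSpace X]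
    [NormedAddCommGroup V] {l : Filter ι} {g : ι → X → V} {K : Set X} {f : X → V} {D : Set V}
    (hg : TendstoUniformlyOn g 0 l K) (hK : IsCompact K) (hf : ContinuousOn f K)
    (hD : IsOpen D) (hfD : MapsTo f K D) :
    ∀ᶠ i in l, MapsTo (fun z => f z + g i z) K D := by
  obtain ⟨ε, hε, hsub⟩ :=
    (hK.image_of_continuousOn hf).exists_thickening_subset_open hD hfD.image_subset
  filter_upwards [Metric.tendstoUniformlyOn_iff.1 hg ε hε] with i hi z hz
  refine hsub (mem_thickening_iff.2 ⟨f z, mem_image_of_mem f hz, ?_⟩)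
  simpa [dist_eq_norm] using hi z hz

theorem weak_extremal_of_limit_nodes_general
    {n : ℕ} (D : Set (Fin n → ℂ)) (hDo : IsOpen D)
    (m : ℕ)
    (lam : Fin m → ℂ) (hinj : Function.Injective lam)
    (hmem : ∀ j, lam j ∈ unitDisc)
    (lamk : ℕ → Fin m → ℂ) (hinjk : ∀ k, Function.Injective (lamk k))
    (htend : ∀ j, Filter.Tendsto (fun k => lamk k j) Filter.atTop (nhds (lam j)))
    (f : ℂ → Fin n → ℂ) (hf : DifferentiableOn ℂ f unitDisc)
    (hext : ∀ k, WeakExtremalFor D f (lamk k)) :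
    WeakExtremalFor D f lam := by
  rintro ⟨U, h, hUo, hU1, hhd, hhD, hhint⟩
  set w : ℕ → Fin m → Fin n → ℂ := fun k j => f (lamk k j) - h (lamk k j)
  have hw : Tendsto w atTop (𝓝 0) := tendsto_pi_nhds.2 fun j => by
    have hfc := hf.continuousOn.continuousAt (isOpen_ball.mem_nhds (hmem j))
    have hhc := hhd.continuousOn.continuousAt
      (hUo.mem_nhds (hU1 (ball_subset_closedBall (hmem j))))
    simpa [hhint j] using (hfc.tendsto.comp (htend j)).sub (hhc.tendsto.comp (htend j))
  have hcorr : TendstoUniformlyOn (fun k => lagrangeInterp (lamk k) (w k)) 0 atTop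
      (closedBall 0 1) :=
    tendstoUniformlyOn_lagrangeInterp hinj (tendsto_pi_nhds.2 htend) hw 1
  obtain ⟨k, hk⟩ := (hcorr.eventually_mapsTo_add (isCompact_closedBall 0 1)
    (hhd.continuousOn.mono hU1) hDo (hhD.mono_left hU1)).exists
  set g : ℂ → Fin n → ℂ := fun z => h z + lagrangeInterp (lamk k) (w k) z
  have hg : DifferentiableOn ℂ g U :=
    hhd.add (differentiable_lagrangeInterp _ _).differentiableOn
  refine hext k ⟨U ∩ g ⁻¹' D, g, hg.continuousOn.isOpen_inter_preimage hUo hDo,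
    subset_inter hU1 hk, hg.mono inter_subset_left, fun z hz => hz.2, fun j => ?_⟩
  simp [g, w, lagrangeInterp_apply_node (hinjk k)]

/-- If `f` is a weak `m`-extremal for pairwise distinct nodes
`λ₁^{(k)}, …, λ_m^{(k)}` converging (as `k → ∞`) to pairwise distinct nodes
`λ₁, …, λ_m ∈ 𝔻`, then `f` is a weak `m`-extremal for `λ₁, …, λ_m`. -/
theorem weak_extremal_of_limit_nodes
    {n : ℕ} (D : Set (Fin n → ℂ)) (hDo : IsOpen D) (hDc : IsConnected D)
    (m : ℕ) (hm : 2 ≤ m)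
    (lam : Fin m → ℂ) (hinj : Function.Injective lam)
    (hmem : ∀ j, lam j ∈ unitDisc)
    (lamk : ℕ → Fin m → ℂ) (hinjk : ∀ k, Function.Injective (lamk k))
    (hmemk : ∀ k j, lamk k j ∈ unitDisc)
    (htend : ∀ j, Filter.Tendsto (fun k => lamk k j) Filter.atTop (nhds (lam j)))
    (f : ℂ → Fin n → ℂ) (hf : DifferentiableOn ℂ f unitDisc)
    (hfD : Set.MapsTo f unitDisc D)
    (hext : ∀ k, WeakExtremalFor D f (lamk k)) :
    WeakExtremalFor D f lam :=
  weak_extremal_of_limit_nodes_general D hDo m lam hinj hmem lamk hinjk htend f hf hext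
end
end

section
/- Let D ⊆ ℂⁿ be a domain, let λ₁,…,λ_m ∈ 𝔻 be pairwise distinct, and let f_k, f : 𝔻 → D be holomorphic maps such that f_k(λ_j) → f(λ_j) as k → ∞ for each j = 1,…,m. If every f_k is a weak m-extremal for λ₁,…,λ_m, then f is a weak m-extremal for λ₁,…,λ_m. -/
open Complex Metric Set Filter

noncomputable section

variable {E : Type*} [NormedAddCommGroup E] [NormedSpace ℂ E]

/-! If some `h`, holomorphic near the closed disc with values in `D`, interpolated `f` at the
nodes, add to it the Lagrange interpolant of the deviations `f_k(λ_j) - f(λ_j)`. These tend to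
`0`, and `h` maps a compact neighbourhood of the closed disc into the open set `D`, so for large
`k` the perturbed map still takes values in `D` there; it interpolates `f_k`, contradicting the
weak extremality of `f_k`. -/

open Function Topology

section LagrangeInterpolant

variable {𝕜 V ι : Type*} [Fintype ι] [DecidableEq ι]

def lagrangeInterpolant [Field 𝕜] [AddCommGroup V] [Module 𝕜 V] (v : ι → 𝕜) (d : ι → V)
    (z : 𝕜) : V :=
  ∑ i, (Lagrange.basis Finset.univ v i).eval z • d i

theorem lagrangeInterpolant_zero [Field 𝕜] [AddCommGroup V] [Module 𝕜 V] (v : ι → 𝕜)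
    (z : 𝕜) : lagrangeInterpolant v (0 : ι → V) z = 0 := by
  simp [lagrangeInterpolant]

theorem lagrangeInterpolant_apply_node [Field 𝕜] [AddCommGroup V] [Module 𝕜 V] {v : ι → 𝕜}
    (hv : Injective v) (d : ι → V) (j : ι) : lagrangeInterpolant v d (v j) = d j := by
  rw [lagrangeInterpolant, Finset.sum_eq_single j]
  · rw [Lagrange.eval_basis_self hv.injOn (Finset.mem_univ j), one_smul]
  · intro i _ hij
    rw [Lagrange.eval_basis_of_ne hij (Finset.mem_univ j), zero_smul]
  · exact fun hj => absurd (Finset.mem_univ j) hj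

theorem continuous_uncurry_lagrangeInterpolant [Field 𝕜] [TopologicalSpace 𝕜]
    [IsTopologicalRing 𝕜] [AddCommGroup V] [Module 𝕜 V] [TopologicalSpace V] [ContinuousAdd V]
    [ContinuousSMul 𝕜 V] (v : ι → 𝕜) : Continuous (uncurry (lagrangeInterpolant (V := V) v)) := by
  unfold lagrangeInterpolant
  fun_prop

theorem differentiable_lagrangeInterpolant [NontriviallyNormedField 𝕜] [NormedAddCommGroup V]
    [NormedSpace 𝕜 V] (v : ι → 𝕜) (d : ι → V) : Differentiable 𝕜 (lagrangeInterpolant v d) :=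
  Differentiable.fun_sum fun i _ => (Polynomial.differentiable _).smul_const (d i)

end LagrangeInterpolant

theorem IsCompact.eventually_mapsTo_add {X A G : Type*} [TopologicalSpace X] [TopologicalSpace A]
    [TopologicalSpace G] [AddZeroClass G] [ContinuousAdd G] {K : Set X} (hK : IsCompact K)
    {h : X → G} (hh : ContinuousOn h K) {D : Set G} (hD : IsOpen D) (hKD : MapsTo h K D)
    {Φ : A → X → G} (hΦ : Continuous (uncurry Φ)) {a₀ : A} (hΦ₀ : ∀ z, Φ a₀ z = 0) :
    ∀ᶠ a in 𝓝 a₀, MapsTo (fun z => h z + Φ a z) K D := by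
  obtain ⟨W, hW, hKW⟩ :=
    compact_open_separated_add_right (hK.image_of_continuousOn hh) hD hKD.image_subset
  have hsmall : ∀ᶠ a in 𝓝 a₀, ∀ z ∈ K, Φ a z ∈ W :=
    hK.eventually_forall_of_forall_eventually fun z _ =>
      hΦ.continuousAt.eventually_mem (by rwa [uncurry_apply_pair, hΦ₀])
  exact hsmall.mono fun a ha z hz => hKW (add_mem_add (mem_image_of_mem h hz) (ha z hz))

theorem weak_extremal_of_limit_values_general
    {n : ℕ} (D : Set (Fin n → ℂ)) (hDo : IsOpen D)
    (m : ℕ) (lam : Fin m → ℂ) (hinj : Function.Injective lam)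
    (fk : ℕ → ℂ → Fin n → ℂ) (f : ℂ → Fin n → ℂ)
    (htend : ∀ j, Filter.Tendsto (fun k => fk k (lam j)) Filter.atTop (nhds (f (lam j))))
    (hext : ∀ k, WeakExtremalFor D (fk k) lam) :
    WeakExtremalFor D f lam := by
  rintro ⟨U, h, hUo, hBU, hhd, hhD, hhf⟩
  obtain ⟨K, hKc, hBK, hKU⟩ := exists_compact_between (isCompact_closedBall 0 1) hUo hBU
  have hnear : ∀ᶠ d in 𝓝 0, MapsTo (fun z => h z + lagrangeInterpolant lam d z) K D :=
    hKc.eventually_mapsTo_add (hhd.continuousOn.mono hKU) hDo (hhD.mono_left hKU)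
      (continuous_uncurry_lagrangeInterpolant lam) (lagrangeInterpolant_zero lam)
  have hdev : Tendsto (fun k j => fk k (lam j) - f (lam j)) atTop (𝓝 0) :=
    tendsto_pi_nhds.2 fun j => by simpa using (htend j).sub_const (f (lam j))
  obtain ⟨k, hk⟩ := (hdev.eventually hnear).exists
  refine hext k ⟨interior K, _, isOpen_interior, hBK,
    (hhd.mono (interior_subset.trans hKU)).add
      (differentiable_lagrangeInterpolant _ _).differentiableOn,
    hk.mono_left interior_subset, fun j => ?_⟩
  simp [lagrangeInterpolant_apply_node hinj, hhf]

/-- If holomorphic maps `f_k : 𝔻 → D` are weak `m`-extremals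
for fixed pairwise distinct nodes `λ₁, …, λ_m` and `f_k(λ_j) → f(λ_j)` for a
holomorphic `f : 𝔻 → D`, then `f` is a weak `m`-extremal for `λ₁, …, λ_m`. -/
theorem weak_extremal_of_limit_values
    {n : ℕ} (D : Set (Fin n → ℂ)) (hDo : IsOpen D) (hDc : IsConnected D)
    (m : ℕ) (hm : 2 ≤ m)
    (lam : Fin m → ℂ) (hinj : Function.Injective lam)
    (hmem : ∀ j, lam j ∈ unitDisc)
    (fk : ℕ → ℂ → Fin n → ℂ) (f : ℂ → Fin n → ℂ)
    (hfk : ∀ k, DifferentiableOn ℂ (fk k) unitDisc)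
    (hfkD : ∀ k, Set.MapsTo (fk k) unitDisc D)
    (hf : DifferentiableOn ℂ f unitDisc) (hfD : Set.MapsTo f unitDisc D)
    (htend : ∀ j, Filter.Tendsto (fun k => fk k (lam j)) Filter.atTop (nhds (f (lam j))))
    (hext : ∀ k, WeakExtremalFor D (fk k) lam) :
    WeakExtremalFor D f lam :=
  weak_extremal_of_limit_values_general D hDo m lam hinj fk f htend hext
end
end

section
/- Let k ∈ ℕ₀ⁿ \ {0} and let D ⊆ ℂⁿ be a k-balanced convex domain. Let f : 𝔻 → D be a holomorphic map of the form f = (m_α^{k₁}·φ₁,…,m_α^{k_n}·φ_n), where α ∈ 𝔻 and φ₁,…,φ_n : 𝔻 → ℂ are holomorphic. Then, writing φ := (φ₁,…,φ_n), either φ(𝔻) ⊆ D or φ(𝔻) ⊆ ∂D. -/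
open Complex Metric Set Filter

noncomputable section

variable {E : Type*} [NormedAddCommGroup E] [NormedSpace ℂ E]

open Topology

/-!
Pick a continuous ℂ-linear functional `ℓ`: for holomorphic `g`, `exp (ℓ ∘ g)` is holomorphic with
modulus `exp (re (ℓ ∘ g))`, so `re (ℓ ∘ g)` obeys the maximum principle. With Hahn–Banach
separation this gives a maximum principle for convex sets.

For `0 < s < 1` and `r < 1` close to `1` we have `|m_α| ≥ s` on the circle `|z| = r`, so there
`s^k φ = (s / m_α)^k f ∈ D` because `D` is `k`-balanced; the convex maximum principle puts
`s^k φ` into `closure D` on the whole disc of radius `r`, and letting `s → 1` gives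
`φ(𝔻) ⊆ closure D`. If some `φ(z₁) ∉ D`, separate it from `D` by `ℓ`: then `re (ℓ ∘ φ)` attains
its maximum at `z₁`, hence is constant, and `φ` never enters `D`.
-/

section MaximumPrinciple

variable {V : Type*} [NormedAddCommGroup V] [NormedSpace ℂ V]

theorem Complex.re_le_of_forall_mem_frontier_re_le [Nontrivial V] {U : Set V}
    (hU : Bornology.IsBounded U) {h : V → ℂ} (hd : DiffContOnCl ℂ h U) {c : ℝ}
    (hc : ∀ z ∈ frontier U, (h z).re ≤ c) {z : V} (hz : z ∈ closure U) : (h z).re ≤ c := by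
  have := Complex.norm_le_of_forall_mem_frontier_norm_le hU
    (Complex.differentiable_exp.comp_diffContOnCl hd) (C := Real.exp c)
    (fun w hw => by simpa [Complex.norm_exp] using hc w hw) hz
  simpa [Complex.norm_exp] using this

theorem Complex.re_eqOn_of_isPreconnected_of_isMaxOn {U : Set V} {h : V → ℂ} {c : V}
    (hc : IsPreconnected U) (ho : IsOpen U) (hd : DifferentiableOn ℂ h U) (hcU : c ∈ U)
    (hm : IsMaxOn (re ∘ h) U c) : EqOn (re ∘ h) (Function.const V (h c).re) U := by
  have hmax : IsMaxOn (norm ∘ cexp ∘ h) U c := fun z hz => by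
    simpa [Complex.norm_exp] using hm hz
  intro z hz
  simpa [Complex.norm_exp] using Complex.norm_eqOn_of_isPreconnected_of_isMaxOn hc ho
    (Complex.differentiable_exp.comp_differentiableOn hd) hcU hmax hz

theorem DiffContOnCl.mapsTo_closure_of_mapsTo_frontier [Nontrivial V] {U : Set V}
    (hU : Bornology.IsBounded U) {g : V → E} (hg : DiffContOnCl ℂ g U) {C : Set E} (hC : Convex ℝ C)
    (hCc : IsClosed C) (hfr : MapsTo g (frontier U) C) : MapsTo g (closure U) C := by
  intro z hz
  by_contra hzC
  obtain ⟨ℓ, u, hℓC, hℓz⟩ := RCLike.geometric_hahn_banach_closed_point (𝕜 := ℂ) hC hCc hzC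
  exact hℓz.not_ge <| Complex.re_le_of_forall_mem_frontier_re_le hU
    (ℓ.differentiable.comp_diffContOnCl hg) (fun w hw => (hℓC _ (hfr hw)).le) hz

theorem DifferentiableOn.mapsTo_or_mapsTo_frontier {U : Set V} (hUc : IsPreconnected U)
    (hUo : IsOpen U) {g : V → E} (hg : DifferentiableOn ℂ g U) {D : Set E} (hDo : IsOpen D)
    (hD : Convex ℝ D) (hgD : MapsTo g U (closure D)) : MapsTo g U D ∨ MapsTo g U (frontier D) := by
  by_cases hin : MapsTo g U D
  · exact Or.inl hin
  obtain ⟨z₁, hz₁, hz₁D⟩ := not_forall₂.1 hin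
  obtain ⟨ℓ, hℓ⟩ := RCLike.geometric_hahn_banach_open_point (𝕜 := ℂ) hD hDo hz₁D
  have hℓcl : ∀ x ∈ closure D, (ℓ x).re ≤ (ℓ (g z₁)).re :=
    closure_minimal (fun x hx => (hℓ x hx).le)
      (isClosed_le (continuous_re.comp ℓ.continuous) continuous_const)
  have hconst := Complex.re_eqOn_of_isPreconnected_of_isMaxOn hUc hUo
    (ℓ.differentiable.comp_differentiableOn hg) hz₁ (fun z hz => hℓcl _ (hgD hz))
  refine Or.inr fun z hz => hDo.frontier_eq ▸ ⟨hgD hz, fun hzD => ?_⟩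
  exact (hℓ _ hzD).ne (hconst hz)

end MaximumPrinciple

theorem one_sub_norm_mobius_sq_le {α z : ℂ} (hα : ‖α‖ < 1) (hz : ‖z‖ ≤ 1) :
    (1 - ‖α‖) ^ 2 * (1 - ‖mobius α z‖ ^ 2) ≤ (1 - ‖α‖ ^ 2) * (1 - ‖z‖ ^ 2) := by
  set a := ‖1 - (starRingEnd ℂ) α * z‖
  set b := ‖z - α‖
  have hid : a ^ 2 - b ^ 2 = (1 - ‖α‖ ^ 2) * (1 - ‖z‖ ^ 2) := by
    simp only [a, b, ← Complex.normSq_eq_norm_sq, Complex.normSq_apply, Complex.sub_re,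
      Complex.sub_im, Complex.mul_re, Complex.mul_im, Complex.one_re, Complex.one_im,
      Complex.conj_re, Complex.conj_im]
    ring
  have ha : 1 - ‖α‖ ≤ a := by
    have := norm_sub_norm_le (1 : ℂ) ((starRingEnd ℂ) α * z)
    rw [norm_one, norm_mul, Complex.norm_conj] at this
    nlinarith [norm_nonneg α]
  have ha0 : 0 < a := by linarith
  have hm : ‖mobius α z‖ = b / a := by rw [mobius, norm_div]
  have hab : 0 ≤ a ^ 2 - b ^ 2 :=
    hid ▸ mul_nonneg (by nlinarith [norm_nonneg α]) (by nlinarith [norm_nonneg z])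
  rw [hm, div_pow, ← hid, one_sub_div (by positivity), mul_div_assoc', div_le_iff₀ (by positivity)]
  exact mul_le_mul_of_nonneg_right (pow_le_pow_left₀ (by linarith) ha 2) hab |>.trans_eq
    (mul_comm _ _)

theorem eventually_forall_mem_sphere_le_norm_mobius {α : ℂ} (hα : ‖α‖ < 1) {s : ℝ}
    (hs0 : 0 ≤ s) (hs1 : s < 1) :
    ∀ᶠ r in 𝓝[<] (1 : ℝ), ∀ z ∈ sphere (0 : ℂ) r, s ≤ ‖mobius α z‖ := by
  have hpos : 0 < (1 - ‖α‖) ^ 2 * (1 - s ^ 2) := by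
    have : 0 < 1 - ‖α‖ := by linarith
    have : 0 < 1 - s ^ 2 := by nlinarith
    positivity
  have hlim : Tendsto (fun r : ℝ => (1 - ‖α‖ ^ 2) * (1 - r ^ 2)) (𝓝[<] 1) (𝓝 0) := by
    have : ContinuousAt (fun r : ℝ => (1 - ‖α‖ ^ 2) * (1 - r ^ 2)) 1 := by fun_prop
    simpa using this.tendsto.mono_left nhdsWithin_le_nhds
  filter_upwards [hlim.eventually_lt_const hpos, self_mem_nhdsWithin] with r hr hr1 z hz
  rw [mem_sphere_zero_iff_norm] at hz
  have := one_sub_norm_mobius_sq_le hα (hz.le.trans (le_of_lt hr1))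
  rw [hz] at this
  have hsq : s ^ 2 < ‖mobius α z‖ ^ 2 := by
    have := lt_of_mul_lt_mul_left (this.trans_lt hr) (sq_nonneg _)
    linarith
  exact (lt_of_pow_lt_pow_left₀ 2 (norm_nonneg _) hsq).le

theorem QuasiBalanced.pow_mul_mem_of_norm_le {n : ℕ} {k : Fin n → ℕ} {D : Set (Fin n → ℂ)}
    (hD : QuasiBalanced k D) {a b : ℂ} {w : Fin n → ℂ} (hw : (fun j => b ^ k j * w j) ∈ D)
    (hab : ‖a‖ ≤ ‖b‖) : (fun j => a ^ k j * w j) ∈ D := by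
  rcases eq_or_ne b 0 with rfl | hb
  · rwa [norm_eq_zero.1 (hab.trans_eq norm_zero |>.antisymm (norm_nonneg a))]
  convert hD (a / b) (by rw [norm_div]; exact div_le_one_of_le₀ hab (norm_nonneg b)) _ hw
    using 2 with j
  rw [div_pow, ← mul_assoc, div_mul_cancel₀ _ (pow_ne_zero _ hb)]

section Quotient

variable {n : ℕ} {k : Fin n → ℕ} {D : Set (Fin n → ℂ)} {α : ℂ} {φ : ℂ → Fin n → ℂ}

theorem pow_mul_mem_closure_of_mapsTo_mobius_pow_mul (hD : Convex ℝ D) (hbal : QuasiBalanced k D)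
    (hα : ‖α‖ < 1) (hφ : DifferentiableOn ℂ φ unitDisc)
    (hf : MapsTo (fun z j => mobius α z ^ k j * φ z j) unitDisc D) {s : ℝ} (hs : s ∈ Ioo 0 1)
    {z : ℂ} (hz : z ∈ unitDisc) : (fun j => (s : ℂ) ^ k j * φ z j) ∈ closure D := by
  have hz1 : ‖z‖ < 1 := mem_ball_zero_iff.1 hz
  obtain ⟨r, hmob, ⟨hzr, hr1⟩, hr0, -⟩ :=
    ((eventually_forall_mem_sphere_le_norm_mobius hα hs.1.le hs.2).and
      (Eventually.and (Ioo_mem_nhdsLT hz1) (Ioo_mem_nhdsLT zero_lt_one))).exists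
  have hr : closedBall (0 : ℂ) r ⊆ unitDisc := closedBall_subset_ball hr1
  have hdiff : DifferentiableOn ℂ (fun w j => (s : ℂ) ^ k j * φ w j) (closedBall 0 r) :=
    differentiableOn_pi.2 fun j => ((differentiableOn_pi.1 hφ j).mono hr).const_mul _
  refine (hdiff.diffContOnCl_ball subset_rfl).mapsTo_closure_of_mapsTo_frontier isBounded_ball
    hD.closure isClosed_closure ?_ ?_
  · rw [frontier_ball (0 : ℂ) hr0.ne']
    intro w hw
    refine subset_closure <| hbal.pow_mul_mem_of_norm_le (hf (hr (sphere_subset_closedBall hw))) ?_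
    simpa [abs_of_pos hs.1] using hmob w hw
  · rw [closure_ball (0 : ℂ) hr0.ne']
    exact mem_closedBall_zero_iff.2 hzr.le

theorem mapsTo_closure_of_mapsTo_mobius_pow_mul (hD : Convex ℝ D) (hbal : QuasiBalanced k D)
    (hα : ‖α‖ < 1) (hφ : DifferentiableOn ℂ φ unitDisc)
    (hf : MapsTo (fun z j => mobius α z ^ k j * φ z j) unitDisc D) :
    MapsTo φ unitDisc (closure D) := by
  intro z hz
  have hlim : Tendsto (fun s : ℝ => fun j => (s : ℂ) ^ k j * φ z j) (𝓝[<] 1) (𝓝 (φ z)) := by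
    have : Continuous (fun s : ℝ => fun j => (s : ℂ) ^ k j * φ z j) := by fun_prop
    simpa using this.continuousAt.tendsto.mono_left (nhdsWithin_le_nhds (a := (1 : ℝ)))
  exact isClosed_closure.mem_of_tendsto hlim <| mem_of_superset (Ioo_mem_nhdsLT zero_lt_one)
    fun s hs => pow_mul_mem_closure_of_mapsTo_mobius_pow_mul hD hbal hα hφ hf hs hz

end Quotient

theorem quotient_in_domain_or_boundary_general
    {n : ℕ} (k : Fin n → ℕ)
    (D : Set (Fin n → ℂ)) (hDo : IsOpen D)
    (hconv : Convex ℝ D) (hbal : QuasiBalanced k D)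
    (α : ℂ) (hα : α ∈ unitDisc)
    (φ : Fin n → ℂ → ℂ) (hφ : ∀ j, DifferentiableOn ℂ (φ j) unitDisc)
    (f : ℂ → Fin n → ℂ) (hf : f = fun z j => mobius α z ^ k j * φ j z)
    (hfD : Set.MapsTo f unitDisc D) :
    (∀ z ∈ unitDisc, (fun j => φ j z) ∈ D) ∨
    (∀ z ∈ unitDisc, (fun j => φ j z) ∈ frontier D) := by
  subst hf
  have hφ' : DifferentiableOn ℂ (fun z j => φ j z) unitDisc := differentiableOn_pi.2 hφ
  exact hφ'.mapsTo_or_mapsTo_frontier (convex_ball 0 1).isPreconnected isOpen_ball hDo hconv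
    (mapsTo_closure_of_mapsTo_mobius_pow_mul hconv hbal (mem_ball_zero_iff.1 hα) hφ' hfD)

/-- Let `D ⊆ ℂⁿ` be a `k`-balanced convex domain and let
`f = (m_α^{k₁} φ₁, …, m_α^{k_n} φ_n) : 𝔻 → D` with `φ_j` holomorphic and
`α ∈ 𝔻`. Then either `φ(𝔻) ⊆ D` or `φ(𝔻) ⊆ ∂D`. -/
theorem quotient_in_domain_or_boundary
    {n : ℕ} (k : Fin n → ℕ) (hk : k ≠ 0)
    (D : Set (Fin n → ℂ)) (hDo : IsOpen D) (hne : D.Nonempty)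
    (hconv : Convex ℝ D) (hbal : QuasiBalanced k D)
    (α : ℂ) (hα : α ∈ unitDisc)
    (φ : Fin n → ℂ → ℂ) (hφ : ∀ j, DifferentiableOn ℂ (φ j) unitDisc)
    (f : ℂ → Fin n → ℂ) (hf : f = fun z j => mobius α z ^ k j * φ j z)
    (hfD : Set.MapsTo f unitDisc D) :
    (∀ z ∈ unitDisc, (fun j => φ j z) ∈ D) ∨
    (∀ z ∈ unitDisc, (fun j => φ j z) ∈ frontier D) :=
  quotient_in_domain_or_boundary_general k D hDo hconv hbal α hα φ hφ f hf hfD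
end
end

section
/- Let k ∈ ℕ₀ⁿ \ {0} and let D ⊆ ℂⁿ be a k-balanced domain. Let λ₁,…,λ_m ∈ 𝔻 be pairwise distinct and let f : 𝔻 → D be a weak m-extremal for λ₁,…,λ_m of the form f = (m_α^{k₁}·φ₁,…,m_α^{k_n}·φ_n), where α ∈ 𝔻, φ₁,…,φ_n : 𝔻 → ℂ are holomorphic, and assume φ := (φ₁,…,φ_n) satisfies φ(𝔻) ⊆ D. Then: (i) φ is a weak m-extremal for λ₁,…,λ_m; and (ii) if m ≥ 3, λ_m = α and k_j ≥ 1 for all j, then φ is a weak (m−1)-extremal for λ₁,…,λ_{m−1}. -/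
open Complex Metric Set Filter

noncomputable section

variable {E : Type*} [NormedAddCommGroup E] [NormedSpace ℂ E]

/-! Write `M h` for `z ↦ (m_α(z)^{k₁} h₁(z), …, m_α(z)^{k_n} h_n(z))`, so that `f = M φ`. Since
`|m_α| ≤ 1` on the closed disc and `D` is `k`-balanced, `M` maps `O(cl 𝔻, D)` into itself, and an
`h` interpolating `φ` at some nodes gives `M h` interpolating `f` at the same nodes; when all
`k_j ≥ 1`, `M h` and `f` also agree at `α`, where both vanish. So an interpolant of `φ` at
`λ₁, …, λ_m`, or at `λ₁, …, λ_{m-1}` when `λ_m = α`, would contradict the extremality of `f`. -/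

/-- Membership in `O(cl 𝔻, D)`. -/
def HolomorphicNearClosedDisc (D : Set E) (h : ℂ → E) : Prop :=
  ∃ U : Set ℂ, IsOpen U ∧ closedBall (0 : ℂ) 1 ⊆ U ∧ DifferentiableOn ℂ h U ∧ MapsTo h U D

theorem WeakExtremalFor.of_transform {E' : Type*} [NormedAddCommGroup E'] [NormedSpace ℂ E']
    {D : Set E} {D' : Set E'} {g : ℂ → E} {f : ℂ → E'} {m m' : ℕ} {lam : Fin m → ℂ}
    {lam' : Fin m' → ℂ} (T : (ℂ → E) → ℂ → E')
    (hT : ∀ h, HolomorphicNearClosedDisc D h → HolomorphicNearClosedDisc D' (T h))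
    (hinterp : ∀ h, (∀ i, h (lam i) = g (lam i)) → ∀ i, T h (lam' i) = f (lam' i))
    (hf : WeakExtremalFor D' f lam') : WeakExtremalFor D g lam := by
  rintro ⟨U, h, hU, hsub, hdiff, hmaps, hint⟩
  obtain ⟨U', hU', hsub', hdiff', hmaps'⟩ := hT h ⟨U, hU, hsub, hdiff, hmaps⟩
  exact hf ⟨U', T h, hU', hsub', hdiff', hmaps', hinterp h hint⟩

theorem HolomorphicNearClosedDisc.pow_mul {n : ℕ} {k : Fin n → ℕ} {D : Set (Fin n → ℂ)}
    {g : ℂ → ℂ} {h : ℂ → Fin n → ℂ} (hh : HolomorphicNearClosedDisc D h) (hDo : IsOpen D)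
    (hbal : QuasiBalanced k D) (hg : HolomorphicNearClosedDisc univ g)
    (hg1 : MapsTo g (closedBall 0 1) (closedBall 0 1)) :
    HolomorphicNearClosedDisc D fun z j => g z ^ k j * h z j := by
  obtain ⟨V, hV, hsubV, hgV, -⟩ := hg
  obtain ⟨U, hU, hsubU, hhU, hmaps⟩ := hh
  have hdiff : DifferentiableOn ℂ (fun z j => g z ^ k j * h z j) (V ∩ U) :=
    differentiableOn_pi.mpr fun j =>
      ((hgV.mono inter_subset_left).pow (k j)).mul
        (differentiableOn_pi.mp (hhU.mono inter_subset_right) j)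
  refine ⟨V ∩ U ∩ (fun z j => g z ^ k j * h z j) ⁻¹' D,
    hdiff.continuousOn.isOpen_inter_preimage (hV.inter hU) hDo,
    fun z hz => ⟨⟨hsubV hz, hsubU hz⟩, ?_⟩, hdiff.mono inter_subset_left, fun _ hz => hz.2⟩
  exact hbal (g z) (mem_closedBall_zero_iff.mp (hg1 hz)) (h z) (hmaps (hsubU hz))

theorem mobius_denom_ne_zero {a z : ℂ} (ha : ‖a‖ < 1) (hz : ‖z‖ ≤ 1) :
    1 - starRingEnd ℂ a * z ≠ 0 := by
  refine sub_ne_zero.mpr fun h => ?_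
  have : ‖starRingEnd ℂ a * z‖ < 1 := by
    rw [norm_mul, RCLike.norm_conj]
    nlinarith [norm_nonneg a, norm_nonneg z]
  simp [← h] at this

theorem norm_mobius_le_one {a z : ℂ} (ha : ‖a‖ < 1) (hz : ‖z‖ ≤ 1) : ‖mobius a z‖ ≤ 1 := by
  have key : normSq (1 - starRingEnd ℂ a * z) - normSq (z - a)
      = (1 - normSq a) * (1 - normSq z) := by
    simp only [normSq_apply, sub_re, sub_im, mul_re, mul_im, one_re, one_im, conj_re, conj_im]
    ring
  have hna : normSq a ≤ 1 := by rw [normSq_eq_norm_sq]; nlinarith [norm_nonneg a]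
  have hnz : normSq z ≤ 1 := by rw [normSq_eq_norm_sq]; nlinarith [norm_nonneg z]
  rw [mobius, norm_div, div_le_one (norm_pos_iff.mpr (mobius_denom_ne_zero ha hz)),
    norm_def, norm_def]
  exact Real.sqrt_le_sqrt (by nlinarith [mul_nonneg (sub_nonneg.mpr hna) (sub_nonneg.mpr hnz)])

theorem holomorphicNearClosedDisc_mobius {a : ℂ} (ha : ‖a‖ < 1) :
    HolomorphicNearClosedDisc univ (mobius a) := by
  refine ⟨{z | 1 - starRingEnd ℂ a * z ≠ 0}, isOpen_ne_fun (by fun_prop) (by fun_prop),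
    fun z hz => mobius_denom_ne_zero ha (mem_closedBall_zero_iff.mp hz), ?_, mapsTo_univ _ _⟩
  exact DifferentiableOn.div (by fun_prop) (by fun_prop) fun _ hz => hz

theorem mapsTo_mobius_closedBall {a : ℂ} (ha : ‖a‖ < 1) :
    MapsTo (mobius a) (closedBall 0 1) (closedBall 0 1) := fun _ hz =>
  mem_closedBall_zero_iff.mpr (norm_mobius_le_one ha (mem_closedBall_zero_iff.mp hz))

/-- Let `D ⊆ ℂⁿ` be a `k`-balanced domain and let
`f = (m_α^{k₁} φ₁, …, m_α^{k_n} φ_n) : 𝔻 → D` be a weak `m`-extremal for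
pairwise distinct `λ₁, …, λ_m`, with `φ(𝔻) ⊆ D`. Then (i) `φ` is a weak
`m`-extremal for `λ₁, …, λ_m`; and (ii) if `m ≥ 3`, `λ_m = α` and all `k_j ≥ 1`,
then `φ` is a weak `(m-1)`-extremal for `λ₁, …, λ_{m-1}`. -/
theorem quotient_weak_extremal
    {n : ℕ} (k : Fin n → ℕ)
    (D : Set (Fin n → ℂ)) (hDo : IsOpen D)
    (hbal : QuasiBalanced k D)
    (m : ℕ) (hm : 2 ≤ m)
    (lam : Fin m → ℂ)
    (α : ℂ) (hα : α ∈ unitDisc)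
    (φ : Fin n → ℂ → ℂ)
    (f : ℂ → Fin n → ℂ) (hf : f = fun z j => mobius α z ^ k j * φ j z)
    (hweak : WeakExtremalFor D f lam) :
    WeakExtremalFor D (fun z j => φ j z) lam ∧
    (3 ≤ m → lam ⟨m - 1, by omega⟩ = α → (∀ j, 1 ≤ k j) →
      WeakExtremalFor D (fun z j => φ j z)
        (fun i : Fin (m - 1) => lam (Fin.castLE (Nat.sub_le m 1) i))) := by
  have hα' : ‖α‖ < 1 := mem_ball_zero_iff.mp hα
  have hT (h : ℂ → Fin n → ℂ) (hh : HolomorphicNearClosedDisc D h) :=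
    hh.pow_mul hDo hbal (holomorphicNearClosedDisc_mobius hα') (mapsTo_mobius_closedBall hα')
  subst hf
  refine ⟨hweak.of_transform _ hT fun h hh i => ?_,
    fun _ hlast hk1 => hweak.of_transform _ hT fun h hh i => ?_⟩
  · simp only [hh i]
  · by_cases hi : (i : ℕ) < m - 1
    · have hi' := hh ⟨i, hi⟩
      simp only [Fin.castLE_mk, Fin.eta] at hi'
      simp only [hi']
    · have hi_last : i = ⟨m - 1, by omega⟩ := Fin.ext (by have := i.isLt; simp only; omega)
      funext j
      simp [hi_last, hlast, mobius, Nat.one_le_iff_ne_zero.mp (hk1 j)]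
end
end
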